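/- arXiv:1702.02605 — 3 statements merged into one kernel-verified Lean document; each statement's English description precedes it below -/
import Mathlib

section
/- For the rational function R(z) = (1 + 2z/5 + z²/20)/(1 − 3z/5 + 3z²/20 − z³/60), one has |R(z)| ≤ 1 for all z ∈ ℂ with Re(z) ≤ 0 (the denominator never vanishes there). -/
/-!
Clearing the factor 60, `R = P / Q` with `P z = 60 + 24 z + 3 z²` and
`Q z = 60 - 36 z + 9 z² - z³`, so `|R z| ≤ 1` amounts to `|P z|² ≤ |Q z|²`. Writing
`z = -a + i y`, the difference `|Q z|² - |P z|²` equals `y⁶` (the E-polynomial of the Padé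
approximant, evaluated on the imaginary axis) plus `a` times a polynomial in `a` and `y` with
positive coefficients, hence is nonnegative for `a ≥ 0`. Likewise `|Q z|²` is a polynomial in
`a, y` with positive coefficients and constant term `3600`, so `Q` has no zero in `Re z ≤ 0`.
-/

open Complex

def pade23Num (z : ℂ) : ℂ := 60 + 24 * z + 3 * z ^ 2

def pade23Den (z : ℂ) : ℂ := 60 - 36 * z + 9 * z ^ 2 - z ^ 3

lemma normSq_pade23Den (z : ℂ) :
    normSq (pade23Den z) =
      let a := -z.re; let y := z.im
      3600 + 216 * y ^ 2 + 9 * y ^ 4 + y ^ 6 + 4320 * a + 288 * a * y ^ 2 + 18 * a * y ^ 4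
        + 2376 * a ^ 2 + 162 * a ^ 2 * y ^ 2 + 3 * a ^ 2 * y ^ 4 + 768 * a ^ 3
        + 36 * a ^ 3 * y ^ 2 + 153 * a ^ 4 + 3 * a ^ 4 * y ^ 2 + 18 * a ^ 5 + a ^ 6 := by
  simp only [pade23Den, normSq_apply, sub_re, sub_im, add_re, add_im, mul_re, mul_im, pow_succ,
    pow_zero, one_re, one_im, re_ofNat, im_ofNat]
  ring

lemma normSq_pade23Den_sub_normSq_pade23Num (z : ℂ) :
    normSq (pade23Den z) - normSq (pade23Num z) =
      let a := -z.re; let y := z.im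
      y ^ 6 + a * (7200 + 432 * y ^ 2 + 18 * y ^ 4 + 1440 * a + 144 * a * y ^ 2
        + 3 * a * y ^ 4 + 912 * a ^ 2 + 36 * a ^ 2 * y ^ 2 + 144 * a ^ 3
        + 3 * a ^ 3 * y ^ 2 + 18 * a ^ 4 + a ^ 5) := by
  simp only [pade23Den, pade23Num, normSq_apply, sub_re, sub_im, add_re, add_im, mul_re,
    mul_im, pow_succ, pow_zero, one_re, one_im, re_ofNat, im_ofNat]
  ring

lemma pade23Den_ne_zero {z : ℂ} (hz : z.re ≤ 0) : pade23Den z ≠ 0 := by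
  rw [← normSq_pos, normSq_pade23Den]
  have ha : 0 ≤ -z.re := by linarith
  generalize -z.re = a at ha ⊢
  positivity

lemma normSq_pade23Num_le_normSq_pade23Den {z : ℂ} (hz : z.re ≤ 0) :
    normSq (pade23Num z) ≤ normSq (pade23Den z) := by
  rw [← sub_nonneg, normSq_pade23Den_sub_normSq_pade23Num]
  have ha : 0 ≤ -z.re := by linarith
  generalize -z.re = a at ha ⊢
  positivity

lemma norm_div_le_one_of_normSq_le {w q : ℂ} (h : normSq w ≤ normSq q) : ‖w / q‖ ≤ 1 := by
  rw [norm_div]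
  refine div_le_one_of_le₀ ?_ (norm_nonneg q)
  rwa [← sq_le_sq₀ (norm_nonneg w) (norm_nonneg q), ← normSq_eq_norm_sq, ← normSq_eq_norm_sq]

theorem stmt_5 (z : ℂ) (hz : z.re ≤ 0) :
    (1 - 3*z/5 + 3*z^2/20 - z^3/60) ≠ 0 ∧
    ‖(1 + 2*z/5 + z^2/20) / (1 - 3*z/5 + 3*z^2/20 - z^3/60)‖ ≤ 1 := by
  have hden : 1 - 3*z/5 + 3*z^2/20 - z^3/60 = pade23Den z / 60 := by unfold pade23Den; ring
  have hnum : 1 + 2*z/5 + z^2/20 = pade23Num z / 60 := by unfold pade23Num; ring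
  rw [hden, hnum, div_div_div_cancel_right₀ (by norm_num)]
  exact ⟨div_ne_zero (pade23Den_ne_zero hz) (by norm_num),
    norm_div_le_one_of_normSq_le (normSq_pade23Num_le_normSq_pade23Den hz)⟩
end

section
/- If y is a polynomial of degree ≤ 5, then for all t and Δt: y(t+Δt) − y(t) = Δt((2/5)y'(t) + (3/5)y'(t+Δt)) + Δt²((1/20)y''(t) − (3/20)y''(t+Δt)) + Δt³((1/60)y'''(t+Δt)). -/
/-!
The defect of the two-point rule is a linear functional on polynomials, so it vanishes on every
polynomial of degree at most 5 as soon as it vanishes on the monomials `1, X, …, X⁵`, where it is a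
direct computation.
-/

open Polynomial

theorem Polynomial.linearMap_eq_zero_of_degree_le {R M : Type*} [CommRing R] [AddCommGroup M]
    [Module R M] (f : R[X] →ₗ[R] M) {n : ℕ} (hf : ∀ i ≤ n, f (X ^ i) = 0) {p : R[X]}
    (hp : p.degree ≤ n) : f p = 0 := by
  classical
  have hker : degreeLE R n ≤ LinearMap.ker f := by
    rw [degreeLE_eq_span_X_pow, Submodule.span_le]
    intro q hq
    obtain ⟨i, hi, rfl⟩ := Finset.mem_image.mp hq
    exact hf i (Nat.lt_succ_iff.mp (Finset.mem_range.mp hi))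
  exact hker (mem_degreeLE.mpr hp)

section TwoPointThreeDeriv

variable {K : Type*} [Field K]

noncomputable def twoPointThreeDerivDefect (t h : K) : K[X] →ₗ[K] K :=
  leval (t + h) - leval t
    - h • ((2/5 : K) • leval t + (3/5 : K) • leval (t + h)) ∘ₗ derivative
    - h ^ 2 • ((1/20 : K) • leval t - (3/20 : K) • leval (t + h)) ∘ₗ derivative ∘ₗ derivative
    - h ^ 3 • ((1/60 : K) • leval (t + h)) ∘ₗ derivative ∘ₗ derivative ∘ₗ derivative

theorem twoPointThreeDerivDefect_apply (t h : K) (p : K[X]) :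
    twoPointThreeDerivDefect t h p =
      p.eval (t + h) - p.eval t
        - h * ((2/5) * p.derivative.eval t + (3/5) * p.derivative.eval (t + h))
        - h ^ 2 * ((1/20) * p.derivative.derivative.eval t
            - (3/20) * p.derivative.derivative.eval (t + h))
        - h ^ 3 * ((1/60) * p.derivative.derivative.derivative.eval (t + h)) := by
  simp [twoPointThreeDerivDefect]

theorem twoPointThreeDerivDefect_X_pow [CharZero K] (t h : K) {i : ℕ} (hi : i ≤ 5) :
    twoPointThreeDerivDefect t h (X ^ i) = 0 := by
  rw [twoPointThreeDerivDefect_apply]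
  interval_cases i <;> simp <;> ring

end TwoPointThreeDeriv

theorem stmt_12 (p : Polynomial ℝ) (hp : p.degree ≤ 5) (t Δt : ℝ) :
    p.eval (t + Δt) - p.eval t =
      Δt * ((2/5) * p.derivative.eval t + (3/5) * p.derivative.eval (t + Δt)) +
      Δt^2 * ((1/20) * p.derivative.derivative.eval t
        - (3/20) * p.derivative.derivative.eval (t + Δt)) +
      Δt^3 * ((1/60) * p.derivative.derivative.derivative.eval (t + Δt)) := by
  have hdefect : twoPointThreeDerivDefect t Δt p = 0 :=
    linearMap_eq_zero_of_degree_le _ (fun _ hi => twoPointThreeDerivDefect_X_pow t Δt hi) hp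
  rw [twoPointThreeDerivDefect_apply] at hdefect
  linear_combination hdefect
end

section
/- If y is a polynomial of degree ≤ 6, then for all t and Δt: y(t+Δt) − y(t) = Δt(½y'(t) + ½y'(t+Δt)) + Δt²((1/10)y''(t) − (1/10)y''(t+Δt)) + Δt³((1/120)y'''(t) + (1/120)y'''(t+Δt)). -/
theorem stmt_13 (p : Polynomial ℝ) (hp : p.degree ≤ 6) (t Δt : ℝ) :
    p.eval (t + Δt) - p.eval t =
      Δt * ((1/2) * p.derivative.eval t + (1/2) * p.derivative.eval (t + Δt)) +
      Δt^2 * ((1/10) * p.derivative.derivative.eval t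
        - (1/10) * p.derivative.derivative.eval (t + Δt)) +
      Δt^3 * ((1/120) * p.derivative.derivative.derivative.eval t
        + (1/120) * p.derivative.derivative.derivative.eval (t + Δt)) := by
  have hnd : p.natDegree < 7 := by
    have h6 : p.natDegree ≤ 6 := Polynomial.natDegree_le_iff_degree_le.mpr (by exact_mod_cast hp)
    omega
  have h := Polynomial.as_sum_range' p 7 hnd
  rw [h]
  simp only [Finset.sum_range_succ, Finset.sum_range_zero, zero_add, map_add,
    Polynomial.derivative_monomial, Polynomial.eval_add, Polynomial.eval_monomial]
  push_cast
  ring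
end
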